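/- Let ν, κ, p > 0 with ν²/(4κ) > 1. Let x_ε be the unique positive zero of g_ε(x) = 1 - 4p/(ν²x) - (4κ/ν²)·(1-e^{-ε²x})/(ε²x). Then x_ε converges to 4p/(ν² - 4κ) as ε → 0. -/

import Mathlib

/-!
Write φ(y) = (1 - e^{-y}) / y, so that the defining equation reads
x_ε (ν² - 4κ φ(ε² x_ε)) = 4p. Since φ ≤ 1 on (0, ∞), the factor in brackets is at least
ν² - 4κ > 0, so x_ε ≤ 4p / (ν² - 4κ) stays bounded. Hence ε² x_ε → 0⁺, so
φ(ε² x_ε) → 1 (the slope of 1 - e^{-y} at 0), and x_ε = 4p / (ν² - 4κ φ(ε² x_ε)) tends to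
4p / (ν² - 4κ).
-/

open Filter Topology Real

lemma one_sub_exp_neg_div_le_one {y : ℝ} (hy : 0 < y) : (1 - exp (-y)) / y ≤ 1 := by
  rw [div_le_one hy]
  linarith [add_one_le_exp (-y)]

lemma tendsto_one_sub_exp_neg_div_nhdsGT_zero :
    Tendsto (fun y : ℝ => (1 - exp (-y)) / y) (𝓝[>] 0) (𝓝 1) := by
  have h : HasDerivAt (fun y : ℝ => 1 - exp (-y)) 1 0 := by
    simpa using ((hasDerivAt_neg' (0 : ℝ)).exp).const_sub 1
  refine h.tendsto_slope_zero_right.congr fun y => ?_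
  simp only [zero_add, neg_zero, exp_zero, smul_eq_mul]
  ring

theorem tendsto_of_mul_sub_mul_comp_sq_mul_eq {a b c : ℝ} (hb : 0 ≤ b) (hba : b < a)
    {ψ : ℝ → ℝ} (hψ_le : ∀ y, 0 < y → ψ y ≤ 1) (hψ : Tendsto ψ (𝓝[>] 0) (𝓝 1))
    {x : ℝ → ℝ} (hx : ∀ ε, 0 < ε → 0 < x ε ∧ x ε * (a - b * ψ (ε ^ 2 * x ε)) = c) :
    Tendsto x (𝓝[>] 0) (𝓝 (c / (a - b))) := by
  have hden : ∀ ε, 0 < ε → a - b ≤ a - b * ψ (ε ^ 2 * x ε) := fun ε hε => by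
    nlinarith [hψ_le _ (mul_pos (pow_pos hε 2) (hx ε hε).1)]
  have hx_le : ∀ ε, 0 < ε → x ε ≤ c / (a - b) := fun ε hε => by
    rw [le_div_iff₀ (sub_pos.2 hba), ← (hx ε hε).2]
    exact mul_le_mul_of_nonneg_left (hden ε hε) (hx ε hε).1.le
  have hy : Tendsto (fun ε => ε ^ 2 * x ε) (𝓝[>] 0) (𝓝[>] 0) := by
    refine tendsto_nhdsWithin_iff.2 ⟨?_, eventually_nhdsWithin_of_forall fun ε hε =>
      mul_pos (pow_pos hε 2) (hx ε hε).1⟩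
    have hlim : Tendsto (fun ε : ℝ => ε ^ 2 * (c / (a - b))) (𝓝[>] 0) (𝓝 0) := by
      simpa using ((by fun_prop : Continuous fun ε : ℝ => ε ^ 2 * (c / (a - b))).tendsto 0
        |>.mono_left nhdsWithin_le_nhds)
    refine tendsto_of_tendsto_of_tendsto_of_le_of_le' tendsto_const_nhds hlim ?_ ?_
    all_goals filter_upwards [self_mem_nhdsWithin] with ε hε
    · exact (mul_pos (pow_pos hε 2) (hx ε hε).1).le
    · exact mul_le_mul_of_nonneg_left (hx_le ε hε) (pow_pos hε 2).le
  have hlim : Tendsto (fun ε => c / (a - b * ψ (ε ^ 2 * x ε))) (𝓝[>] 0)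
      (𝓝 (c / (a - b * 1))) :=
    tendsto_const_nhds.div (tendsto_const_nhds.sub (tendsto_const_nhds.mul (hψ.comp hy)))
      (by linarith)
  rw [mul_one] at hlim
  refine hlim.congr' ?_
  filter_upwards [self_mem_nhdsWithin] with ε hε
  rw [div_eq_iff (by linarith [hden ε hε])]
  exact (hx ε hε).2.symm

theorem x_eps_limit_general (ν κ p : ℝ) (hκ : 0 < κ)
    (hM : 1 < ν ^ 2 / (4 * κ)) (xe : ℝ → ℝ)
    (hxe : ∀ ε : ℝ, 0 < ε → 0 < xe ε ∧
      1 - 4 * p / (ν ^ 2 * xe ε)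
        - (4 * κ / ν ^ 2) * ((1 - Real.exp (-(ε ^ 2 * xe ε))) / (ε ^ 2 * xe ε)) = 0) :
    Filter.Tendsto xe (nhdsWithin 0 (Set.Ioi 0)) (nhds (4 * p / (ν ^ 2 - 4 * κ))) := by
  have hD : 4 * κ < ν ^ 2 := (one_lt_div (by positivity)).1 hM
  refine tendsto_of_mul_sub_mul_comp_sq_mul_eq (by positivity) hD
    (fun _ => one_sub_exp_neg_div_le_one) tendsto_one_sub_exp_neg_div_nhdsGT_zero
    fun ε hε => ⟨(hxe ε hε).1, ?_⟩
  obtain ⟨hx, heq⟩ := hxe ε hε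
  generalize (1 - Real.exp (-(ε ^ 2 * xe ε))) / (ε ^ 2 * xe ε) = φ at heq ⊢
  have hν : ν ≠ 0 := by rintro rfl; linarith
  field_simp at heq
  linarith

theorem x_eps_limit (ν κ p : ℝ) (hν : 0 < ν) (hκ : 0 < κ) (hp : 0 < p)
    (hM : 1 < ν ^ 2 / (4 * κ)) (xe : ℝ → ℝ)
    (hxe : ∀ ε : ℝ, 0 < ε → 0 < xe ε ∧
      1 - 4 * p / (ν ^ 2 * xe ε)
        - (4 * κ / ν ^ 2) * ((1 - Real.exp (-(ε ^ 2 * xe ε))) / (ε ^ 2 * xe ε)) = 0) :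
    Filter.Tendsto xe (nhdsWithin 0 (Set.Ioi 0)) (nhds (4 * p / (ν ^ 2 - 4 * κ))) :=
  x_eps_limit_general ν κ p hκ hM xe hxe
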